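/- arXiv:1312.1656 — 6 statements merged into one kernel-verified Lean document; each statement's English description precedes it below -/
import Mathlib

section
/- Let c,g,d ∈ ℕ* and let P be a stochastic matrix on ℕ such that ∑_{j=0}^{c} P(i,j) = 1 for every 0 ≤ i ≤ g−1, and for every i ≥ g, P(i,j) = a_{j−i}(i) if i−g ≤ j ≤ i+d and P(i,j) = 0 otherwise, where (a_{−g}(i),…,a_d(i)) ∈ [0,1]^{g+d+1} with ∑_{k=−g}^{d} a_k(i) = 1. Assume lim_{i→∞} a_k(i) = a_k ∈ [0,1] for every −g ≤ k ≤ d, and that there exists γ ∈ (1,∞) with φ(γ) := ∑_{k=−g}^{d} a_k γ^k < 1. Set V_γ(n) := γ^n. Then for every N ∈ ℕ*, lim_{n→∞} (P^N V_γ)(n)/γ^n = φ(γ)^N; consequently L := inf_{N≥1} (limsup_{n→∞} (P^N V_γ)(n)/γ^n)^{1/N} = φ(γ) < 1, and for every δ ∈ (φ(γ),1) there exist N ∈ ℕ* and d' ∈ (0,∞) with (P^N V_γ)(n) ≤ δ^N γ^n + d' for all n. -/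
open Filter

/-- Action of an infinite matrix `P` on functions `f : ℕ → ℝ`: `(Pf)(i) = ∑_j P(i,j) f(j)`. -/
noncomputable def matAct (P : ℕ → ℕ → ℝ) (f : ℕ → ℝ) : ℕ → ℝ := fun i => ∑' j, P i j * f j

lemma sum_Icc_int_eq (g d : ℕ) (f : ℤ → ℝ) :
    ∑ k ∈ Finset.Icc (-(g:ℤ)) (d:ℤ), f k
      = ∑ m ∈ Finset.range (g+d+1), f ((m:ℤ) - g) := by
  refine Finset.sum_nbij' (fun k => (k + (g:ℤ)).toNat) (fun m => (m:ℤ) - g) ?_ ?_ ?_ ?_ ?_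
  · intro a ha; simp only [Finset.mem_Icc] at ha; simp only [Finset.mem_range]; omega
  · intro a ha; simp only [Finset.mem_range] at ha; simp only [Finset.mem_Icc]; omega
  · intro a ha; simp only [Finset.mem_Icc] at ha; omega
  · intro a ha; simp only [Finset.mem_range] at ha; omega
  · intro a ha; simp only [Finset.mem_Icc] at ha
    congr 1; omega

lemma key_step (g d : ℕ)
    (P : ℕ → ℕ → ℝ) (a : ℤ → ℕ → ℝ)
    (hP : ∀ i, g ≤ i → ∀ j : ℕ,
      P i j = if (i : ℤ) - g ≤ (j : ℤ) ∧ (j : ℤ) ≤ (i : ℤ) + d then a ((j : ℤ) - (i : ℤ)) i else 0)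
    (A : ℤ → ℝ)
    (hA : ∀ k ∈ Finset.Icc (-(g : ℤ)) (d : ℤ),
      (0 ≤ A k ∧ A k ≤ 1) ∧ Filter.Tendsto (a k) Filter.atTop (nhds (A k)))
    (γ : ℝ) (hγ : 1 < γ) (f : ℕ → ℝ) (L : ℝ)
    (hf : Tendsto (fun n : ℕ => f n / γ ^ n) atTop (nhds L)) :
    Tendsto (fun n : ℕ => matAct P f n / γ ^ n) atTop
      (nhds ((∑ k ∈ Finset.Icc (-(g : ℤ)) (d : ℤ), A k * γ ^ k) * L)) := by
  have hγ0 : (0:ℝ) < γ := lt_trans one_pos hγ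
  have hγne : γ ≠ 0 := ne_of_gt hγ0
  have htarget : (∑ k ∈ Finset.Icc (-(g : ℤ)) (d : ℤ), A k * γ ^ k) * L
      = ∑ m ∈ Finset.range (g+d+1), A ((m:ℤ) - g) * L * (γ ^ m / γ ^ g) := by
    rw [sum_Icc_int_eq g d (fun k => A k * γ ^ k), Finset.sum_mul]
    refine Finset.sum_congr rfl fun m _ => ?_
    rw [zpow_sub₀ hγne, zpow_natCast, zpow_natCast]
    ring
  rw [htarget]
  have hS : Tendsto (fun n : ℕ => ∑ m ∈ Finset.range (g+d+1),
      a ((m:ℤ) - g) n * (f (n - g + m) / γ ^ (n - g + m)) * (γ ^ m / γ ^ g)) atTop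
      (nhds (∑ m ∈ Finset.range (g+d+1), A ((m:ℤ) - g) * L * (γ ^ m / γ ^ g))) := by
    refine tendsto_finset_sum _ fun m hm => ?_
    simp only [Finset.mem_range] at hm
    have hmem : ((m:ℤ) - g) ∈ Finset.Icc (-(g : ℤ)) (d : ℤ) := by
      simp only [Finset.mem_Icc]; omega
    have h1 : Tendsto (a ((m:ℤ) - g)) atTop (nhds (A ((m:ℤ) - g))) := (hA _ hmem).2
    have h2 : Tendsto (fun n : ℕ => n - g + m) atTop atTop := by
      refine tendsto_atTop_atTop.mpr fun b => ⟨b + g, fun n hn => by omega⟩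
    exact (h1.mul (hf.comp h2)).mul tendsto_const_nhds
  refine hS.congr' ?_
  filter_upwards [eventually_ge_atTop g] with n hn
  have hvan : ∀ j ∉ Finset.Icc (n - g) (n + d), P n j * f j = 0 := by
    intro j hj
    simp only [Finset.mem_Icc] at hj
    rw [hP n hn j, if_neg, zero_mul]
    rintro ⟨h1, h2⟩; omega
  rw [matAct, tsum_eq_sum hvan, ← Finset.Ico_add_one_right_eq_Icc, Finset.sum_Ico_eq_sum_range]
  have hcard : n + d + 1 - (n - g) = g + d + 1 := by omega
  rw [hcard, Finset.sum_div]
  refine (Finset.sum_congr rfl fun m hm => ?_).symm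
  simp only [Finset.mem_range] at hm
  have hPval : P n (n - g + m) = a ((m:ℤ) - g) n := by
    rw [hP n hn]
    rw [if_pos]
    · congr 1; omega
    · constructor <;> omega
  rw [hPval]
  have hpow : γ ^ (n - g + m) * γ ^ g = γ ^ n * γ ^ m := by
    rw [← pow_add, ← pow_add]; congr 1; omega
  have hne1 : γ ^ (n - g + m) ≠ 0 := pow_ne_zero _ hγne
  have hne2 : γ ^ g ≠ 0 := pow_ne_zero _ hγne
  have hne3 : γ ^ n ≠ 0 := pow_ne_zero _ hγne
  field_simp
  linear_combination (a ((m:ℤ) - g) n * f (n - g + m)) * hpow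

/-- for a random walk with bounded state-dependent increments whose
increment distributions converge, `(P^N V_γ)(n)/γ^n → φ(γ)^N`; consequently
`L = φ(γ) < 1` and the weak drift condition holds with any `δ ∈ (φ(γ),1)`. -/
theorem rw_state_dependent_increments
    (c g d : ℕ) (hc : 1 ≤ c) (hg : 1 ≤ g) (hd : 1 ≤ d)
    (P : ℕ → ℕ → ℝ)
    (hPpos : ∀ i j, 0 ≤ P i j) (hProw : ∀ i, HasSum (P i) 1)
    (hbound : ∀ i < g, ∑ j ∈ Finset.range (c + 1), P i j = 1)
    (a : ℤ → ℕ → ℝ)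
    (ha01 : ∀ k ∈ Finset.Icc (-(g : ℤ)) (d : ℤ), ∀ i, 0 ≤ a k i ∧ a k i ≤ 1)
    (hasum : ∀ i, g ≤ i → ∑ k ∈ Finset.Icc (-(g : ℤ)) (d : ℤ), a k i = 1)
    (hP : ∀ i, g ≤ i → ∀ j : ℕ,
      P i j = if (i : ℤ) - g ≤ (j : ℤ) ∧ (j : ℤ) ≤ (i : ℤ) + d then a ((j : ℤ) - (i : ℤ)) i else 0)
    (A : ℤ → ℝ)
    (hA : ∀ k ∈ Finset.Icc (-(g : ℤ)) (d : ℤ),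
      (0 ≤ A k ∧ A k ≤ 1) ∧ Filter.Tendsto (a k) Filter.atTop (nhds (A k)))
    (γ : ℝ) (hγ : 1 < γ)
    (hφ : ∑ k ∈ Finset.Icc (-(g : ℤ)) (d : ℤ), A k * γ ^ k < 1) :
    (∀ N : ℕ, 1 ≤ N →
      Filter.Tendsto (fun n : ℕ => (matAct P)^[N] (fun m : ℕ => γ ^ m) n / γ ^ n)
        Filter.atTop (nhds ((∑ k ∈ Finset.Icc (-(g : ℤ)) (d : ℤ), A k * γ ^ k) ^ N)))
    ∧ ((⨅ N : {n : ℕ // 1 ≤ n},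
        (Filter.limsup (fun n : ℕ => (matAct P)^[(N : ℕ)] (fun m : ℕ => γ ^ m) n / γ ^ n)
          Filter.atTop) ^ (1 / ((N : ℕ) : ℝ)))
        = ∑ k ∈ Finset.Icc (-(g : ℤ)) (d : ℤ), A k * γ ^ k)
    ∧ ((∑ k ∈ Finset.Icc (-(g : ℤ)) (d : ℤ), A k * γ ^ k) < 1)
    ∧ (∀ δ : ℝ, (∑ k ∈ Finset.Icc (-(g : ℤ)) (d : ℤ), A k * γ ^ k) < δ → δ < 1 →
        ∃ N : ℕ, 1 ≤ N ∧ ∃ d' : ℝ, 0 < d' ∧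
          ∀ n : ℕ, (matAct P)^[N] (fun m : ℕ => γ ^ m) n ≤ δ ^ N * γ ^ n + d') := by
  have hγ0 : (0:ℝ) < γ := lt_trans one_pos hγ
  set φ := ∑ k ∈ Finset.Icc (-(g : ℤ)) (d : ℤ), A k * γ ^ k with hφdef
  have hφ0 : 0 ≤ φ := by
    apply Finset.sum_nonneg
    intro k hk
    exact mul_nonneg (hA k hk).1.1 (le_of_lt (zpow_pos hγ0 k))
  -- the main convergence, for all N
  have hmain : ∀ N : ℕ,
      Tendsto (fun n : ℕ => (matAct P)^[N] (fun m : ℕ => γ ^ m) n / γ ^ n)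
        atTop (nhds (φ ^ N)) := by
    intro N
    induction N with
    | zero =>
      simp only [Function.iterate_zero, id_eq, pow_zero]
      have : (fun n : ℕ => γ ^ n / γ ^ n) = fun _ : ℕ => (1:ℝ) := by
        funext n; exact div_self (pow_ne_zero _ (ne_of_gt hγ0))
      rw [this]
      exact tendsto_const_nhds
    | succ N ih =>
      have := key_step g d P a hP A hA γ hγ _ _ ih
      rw [pow_succ]
      simpa only [Function.iterate_succ_apply', mul_comm] using this
  refine ⟨fun N _ => hmain N, ?_, hφ, ?_⟩
  · -- the infimum computation
    have hterm : ∀ N : {n : ℕ // 1 ≤ n},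
        (Filter.limsup (fun n : ℕ => (matAct P)^[(N : ℕ)] (fun m : ℕ => γ ^ m) n / γ ^ n)
          Filter.atTop) ^ (1 / ((N : ℕ) : ℝ)) = φ := by
      rintro ⟨N, hN⟩
      have hls := (hmain N).limsup_eq
      simp only
      rw [hls, ← Real.rpow_natCast φ N, ← Real.rpow_mul hφ0]
      have hNne : ((N:ℝ)) ≠ 0 := Nat.cast_ne_zero.mpr (by omega)
      rw [mul_one_div, div_self hNne, Real.rpow_one]
    rw [iInf_congr hterm]
    exact ciInf_const
  · -- drift condition
    intro δ hδ1 hδ2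
    have hδ0 : 0 < δ := lt_of_le_of_lt hφ0 hδ1
    have h1 := hmain 1
    rw [pow_one] at h1
    have hev : ∀ᶠ n in atTop,
        (matAct P)^[1] (fun m : ℕ => γ ^ m) n / γ ^ n < δ :=
      h1.eventually (eventually_lt_nhds hδ1)
    obtain ⟨n0, hn0⟩ := eventually_atTop.mp hev
    refine ⟨1, le_refl 1, 1 + ∑ m ∈ Finset.range n0, |(matAct P)^[1] (fun m : ℕ => γ ^ m) m|, ?_, ?_⟩
    · positivity
    · intro n
      rcases le_or_gt n0 n with h | h
      · have := hn0 n h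
        have hle : (matAct P)^[1] (fun m : ℕ => γ ^ m) n ≤ δ * γ ^ n := by
          have := (div_lt_iff₀ (pow_pos hγ0 n)).mp this
          linarith
        have hd'pos : (0:ℝ) ≤ 1 + ∑ m ∈ Finset.range n0, |(matAct P)^[1] (fun m : ℕ => γ ^ m) m| := by
          positivity
        rw [pow_one]
        linarith
      · have hle : (matAct P)^[1] (fun m : ℕ => γ ^ m) n
            ≤ ∑ m ∈ Finset.range n0, |(matAct P)^[1] (fun m : ℕ => γ ^ m) m| := by
          calc (matAct P)^[1] (fun m : ℕ => γ ^ m) n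
              ≤ |(matAct P)^[1] (fun m : ℕ => γ ^ m) n| := le_abs_self _
            _ ≤ _ := Finset.single_le_sum (f := fun m => |(matAct P)^[1] (fun m : ℕ => γ ^ m) m|)
                (fun i _ => abs_nonneg _) (Finset.mem_range.mpr h)
        have hpos : 0 < δ ^ 1 * γ ^ n := by positivity
        linarith
end

section
/- Let g,d ∈ ℕ* and (a_{−g},…,a_d) ∈ [0,1]^{g+d+1} with a_{−g} > 0, a_d > 0, ∑_{k=−g}^{d} a_k = 1 and ∑_{k=−g}^{d} k·a_k < 0. Then for every λ ∈ ℂ with δ̂ < |λ| < 1, the polynomial E_λ has no root of modulus exactly γ̂; that is, if z ∈ ℂ satisfies E_λ(z) = 0 then |z| ≠ γ̂, so every root satisfies |z| < γ̂ or |z| > γ̂. -/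
/-! If `E_λ(z) = 0` then `λ z^g = ∑ a_k z^{g+k}`, so by the triangle inequality and `a_k ≥ 0`,
`|λ| ≤ φ(|z|)` whenever `z ≠ 0`. At `|z| = γ̂` this contradicts `δ̂ = φ(γ̂) < |λ|`. -/

/-- `φ(t) := ∑_{k=-g}^{d} a_k t^k`. -/
noncomputable def phiF (g d : ℕ) (a : ℤ → ℝ) (t : ℝ) : ℝ :=
  ∑ k ∈ Finset.Icc (-(g : ℤ)) (d : ℤ), a k * t ^ k

/-- The polynomial `E_λ(z) := ∑_{k=-g}^{d} a_k z^{g+k} - λ z^g`. -/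
noncomputable def Epoly (g d : ℕ) (a : ℤ → ℝ) (lam : ℂ) : Polynomial ℂ :=
  (∑ k ∈ Finset.Icc (-(g : ℤ)) (d : ℤ),
      Polynomial.C ((a k : ℝ) : ℂ) * Polynomial.X ^ ((g : ℤ) + k).toNat)
    - Polynomial.C lam * Polynomial.X ^ g

open Finset

section

variable {g d : ℕ} {a : ℤ → ℝ}

theorem eval_Epoly (lam z : ℂ) :
    (Epoly g d a lam).eval z
      = ∑ k ∈ Icc (-(g : ℤ)) (d : ℤ), (a k : ℂ) * z ^ ((g : ℤ) + k).toNat - lam * z ^ g := by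
  simp only [Epoly, Polynomial.eval_sub, Polynomial.eval_finsetSum, Polynomial.eval_mul,
    Polynomial.eval_pow, Polynomial.eval_C, Polynomial.eval_X]

theorem sum_mul_pow_toNat_eq_phiF_mul_pow {t : ℝ} (ht : t ≠ 0) :
    ∑ k ∈ Icc (-(g : ℤ)) (d : ℤ), a k * t ^ ((g : ℤ) + k).toNat = phiF g d a t * t ^ g := by
  rw [phiF, sum_mul]
  refine sum_congr rfl fun k hk => ?_
  have hgk : (0 : ℤ) ≤ g + k := by linarith [(mem_Icc.mp hk).1]
  rw [mul_assoc, ← zpow_natCast t g, ← zpow_add₀ ht, ← zpow_natCast t (g + k).toNat,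
    Int.toNat_of_nonneg hgk, add_comm]

theorem norm_mul_pow_le_of_eval_Epoly_eq_zero (ha : ∀ k ∈ Icc (-(g : ℤ)) (d : ℤ), 0 ≤ a k)
    {lam z : ℂ} (hz : (Epoly g d a lam).eval z = 0) :
    ‖lam‖ * ‖z‖ ^ g ≤ ∑ k ∈ Icc (-(g : ℤ)) (d : ℤ), a k * ‖z‖ ^ ((g : ℤ) + k).toNat := by
  have hroot : ∑ k ∈ Icc (-(g : ℤ)) (d : ℤ), (a k : ℂ) * z ^ ((g : ℤ) + k).toNat = lam * z ^ g :=
    sub_eq_zero.mp ((eval_Epoly lam z).symm.trans hz)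
  calc ‖lam‖ * ‖z‖ ^ g
      = ‖∑ k ∈ Icc (-(g : ℤ)) (d : ℤ), (a k : ℂ) * z ^ ((g : ℤ) + k).toNat‖ := by
        rw [hroot, norm_mul, norm_pow]
    _ ≤ ∑ k ∈ Icc (-(g : ℤ)) (d : ℤ), ‖(a k : ℂ) * z ^ ((g : ℤ) + k).toNat‖ := norm_sum_le _ _
    _ = ∑ k ∈ Icc (-(g : ℤ)) (d : ℤ), a k * ‖z‖ ^ ((g : ℤ) + k).toNat := by
        refine sum_congr rfl fun k hk => ?_
        rw [norm_mul, norm_pow, Complex.norm_real, Real.norm_of_nonneg (ha k hk)]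

theorem norm_le_phiF_of_eval_Epoly_eq_zero (ha : ∀ k ∈ Icc (-(g : ℤ)) (d : ℤ), 0 ≤ a k)
    {lam z : ℂ} (hz : (Epoly g d a lam).eval z = 0) (hz0 : z ≠ 0) :
    ‖lam‖ ≤ phiF g d a ‖z‖ := by
  have hbound := norm_mul_pow_le_of_eval_Epoly_eq_zero ha hz
  rw [sum_mul_pow_toNat_eq_phiF_mul_pow (norm_ne_zero_iff.mpr hz0)] at hbound
  exact le_of_mul_le_mul_right hbound (pow_pos (norm_pos_iff.mpr hz0) g)

end

theorem no_root_of_modulus_gammahat_general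
    (g d : ℕ) (a : ℤ → ℝ)
    (ha01 : ∀ k ∈ Finset.Icc (-(g : ℤ)) (d : ℤ), 0 ≤ a k ∧ a k ≤ 1)
    (γhat : ℝ) (hγhat1 : 1 < γhat) :
    ∀ lam : ℂ, phiF g d a γhat < ‖lam‖ → ‖lam‖ < 1 →
      ∀ z : ℂ, (Epoly g d a lam).eval z = 0 →
        ‖z‖ ≠ γhat ∧ (‖z‖ < γhat ∨ γhat < ‖z‖) := by
  intro lam hlo _ z hz
  have hne : ‖z‖ ≠ γhat := by
    intro hzγ
    have hz0 : z ≠ 0 := norm_pos_iff.mp (by linarith)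
    have hle := norm_le_phiF_of_eval_Epoly_eq_zero (fun k hk => (ha01 k hk).1) hz hz0
    rw [hzγ] at hle
    linarith
  exact ⟨hne, hne.lt_or_gt⟩

/-- for `λ` in the annulus `δ̂ < |λ| < 1`, where `γ̂` is the minimizer of
`φ` on `(1,∞)` and `δ̂ := φ(γ̂)`, the polynomial `E_λ` has no root of modulus exactly
`γ̂`: every root satisfies `|z| < γ̂` or `|z| > γ̂`. -/
theorem no_root_of_modulus_gammahat
    (g d : ℕ) (hg : 1 ≤ g) (hd : 1 ≤ d) (a : ℤ → ℝ)
    (ha01 : ∀ k ∈ Finset.Icc (-(g : ℤ)) (d : ℤ), 0 ≤ a k ∧ a k ≤ 1)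
    (hag : 0 < a (-(g : ℤ))) (had : 0 < a (d : ℤ))
    (hsum : ∑ k ∈ Finset.Icc (-(g : ℤ)) (d : ℤ), a k = 1)
    (hneri : ∑ k ∈ Finset.Icc (-(g : ℤ)) (d : ℤ), (k : ℝ) * a k < 0)
    (γhat : ℝ) (hγhat1 : 1 < γhat)
    (hγhatmin : ∀ t : ℝ, 1 < t → phiF g d a γhat ≤ phiF g d a t) :
    ∀ lam : ℂ, phiF g d a γhat < ‖lam‖ → ‖lam‖ < 1 →
      ∀ z : ℂ, (Epoly g d a lam).eval z = 0 →
        ‖z‖ ≠ γhat ∧ (‖z‖ < γhat ∨ γhat < ‖z‖) :=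
  no_root_of_modulus_gammahat_general g d a ha01 γhat hγhat1
end

section
/- Let g,d ∈ ℕ* and (a_{−g},…,a_d) ∈ [0,1]^{g+d+1} with a_{−g} > 0, a_d > 0, ∑_{k=−g}^{d} a_k = 1 and ∑_{k=−g}^{d} k·a_k < 0. Then the function N(·) is constant on the annulus Λ := {λ ∈ ℂ : δ̂ < |λ| < 1}: for any λ₁, λ₂ ∈ Λ, the number of roots of E_{λ₁} of modulus < γ̂ counted with multiplicity equals the number of roots of E_{λ₂} of modulus < γ̂ counted with multiplicity. -/
open scoped Classical in
/-- `N(λ)`: number of roots of `E_λ` of modulus `< γ̂`, counted with multiplicity. -/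
noncomputable def Ncount (g d : ℕ) (a : ℤ → ℝ) (γhat : ℝ) (lam : ℂ) : ℕ :=
  Multiset.card (Multiset.filter (fun z => ‖z‖ < γhat) (Epoly g d a lam).roots)

open Polynomial Filter Topology Finset

theorem Multiset.exists_eq_map_fin {α : Type*} {m : Multiset α} {N : ℕ}
    (h : Multiset.card m = N) : ∃ z : Fin N → α, m = univ.val.map z := by
  have hl : m.toList.length = N := by rw [Multiset.length_toList, h]
  refine ⟨fun j => m.toList.get (j.cast hl.symm), ?_⟩
  rw [Fin.univ_val_map, ← List.ofFn_congr hl, List.ofFn_get, Multiset.coe_toList]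

theorem Filter.Tendsto.eventually_norm_lt_iff {α E : Type*} [SeminormedAddGroup E]
    {l : Filter α} {f : α → E} {x : E} (h : Tendsto f l (𝓝 x)) {r : ℝ} (hx : ‖x‖ ≠ r) :
    ∀ᶠ n in l, (‖f n‖ < r ↔ ‖x‖ < r) := by
  rcases hx.lt_or_gt with hx | hx
  · filter_upwards [h.norm.eventually (gt_mem_nhds hx)] with n hn
    exact iff_of_true hn hx
  · filter_upwards [h.norm.eventually (lt_mem_nhds hx)] with n hn
    exact iff_of_false hn.not_gt hx.not_gt

theorem isPreconnected_annulus {E : Type*} [NormedAddCommGroup E] [NormedSpace ℝ E]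
    (hE : 1 < Module.rank ℝ E) {r R : ℝ} (hr : 0 ≤ r) :
    IsPreconnected {x : E | r < ‖x‖ ∧ ‖x‖ < R} := by
  have himage : (fun p : ℝ × E => p.1 • p.2) '' (Set.Ioo r R ×ˢ Metric.sphere 0 1)
      = {x : E | r < ‖x‖ ∧ ‖x‖ < R} := by
    ext x
    constructor
    · rintro ⟨⟨t, u⟩, ⟨ht, hu⟩, rfl⟩
      rw [mem_sphere_zero_iff_norm] at hu
      have : ‖t • u‖ = t := by rw [norm_smul, hu, mul_one, Real.norm_of_nonneg (hr.trans ht.1.le)]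
      show r < ‖t • u‖ ∧ ‖t • u‖ < R
      rwa [this]
    · rintro hx
      have hx0 : 0 < ‖x‖ := hr.trans_lt hx.1
      refine ⟨(‖x‖, ‖x‖⁻¹ • x), ⟨hx, ?_⟩, ?_⟩
      · rw [mem_sphere_zero_iff_norm, norm_smul, norm_inv, norm_norm, inv_mul_cancel₀ hx0.ne']
      · simp only [smul_smul, mul_inv_cancel₀ hx0.ne', one_smul]
  rw [← himage]
  exact (isPreconnected_Ioo.prod (isPreconnected_sphere hE 0 1)).image _
    continuous_smul.continuousOn

namespace Polynomial

section Tendsto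

variable {α : Type*} {l : Filter α} {R : Type*}

theorem tendsto_coeff_mul [Semiring R] [TopologicalSpace R] [IsTopologicalSemiring R]
    {p q : α → R[X]} {P Q : R[X]}
    (hp : ∀ i, Tendsto (fun n => (p n).coeff i) l (𝓝 (P.coeff i)))
    (hq : ∀ i, Tendsto (fun n => (q n).coeff i) l (𝓝 (Q.coeff i))) (k : ℕ) :
    Tendsto (fun n => (p n * q n).coeff k) l (𝓝 ((P * Q).coeff k)) := by
  simp only [coeff_mul]
  exact tendsto_finsetSum _ fun x _ => (hp x.1).mul (hq x.2)

theorem tendsto_coeff_prod [CommSemiring R] [TopologicalSpace R] [IsTopologicalSemiring R]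
    {ι : Type*} (s : Finset ι) {p : α → ι → R[X]} {P : ι → R[X]}
    (h : ∀ j ∈ s, ∀ i, Tendsto (fun n => (p n j).coeff i) l (𝓝 ((P j).coeff i))) (k : ℕ) :
    Tendsto (fun n => (∏ j ∈ s, p n j).coeff k) l (𝓝 ((∏ j ∈ s, P j).coeff k)) := by
  induction s using Finset.cons_induction generalizing k with
  | empty => exact tendsto_const_nhds
  | cons j s hj ih =>
    simp only [prod_cons]
    exact tendsto_coeff_mul (h j (mem_cons_self j s))
      (ih fun j' hj' => h j' (mem_cons_of_mem hj')) k

theorem tendsto_coeff_prod_X_sub_C [CommRing R] [TopologicalSpace R] [IsTopologicalRing R]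
    {ι : Type*} [Fintype ι] {z : α → ι → R} {w : ι → R} (h : Tendsto z l (𝓝 w)) (k : ℕ) :
    Tendsto (fun n => (∏ j, (X - C (z n j))).coeff k) l (𝓝 ((∏ j, (X - C (w j))).coeff k)) := by
  refine tendsto_coeff_prod _ (fun j _ i => ?_) k
  simp only [coeff_sub, coeff_C]
  split_ifs
  · exact tendsto_const_nhds.sub (tendsto_pi_nhds.mp h j)
  · exact tendsto_const_nhds

end Tendsto

theorem exists_eq_prod_X_sub_C {k : Type*} [Field k] [IsAlgClosed k] {p : k[X]} {N : ℕ}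
    (hp : p.Monic) (hN : p.natDegree = N) : ∃ z : Fin N → k, p = ∏ j, (X - C (z j)) := by
  have hcard := IsAlgClosed.card_roots_eq_natDegree (p := p)
  obtain ⟨z, hz⟩ := Multiset.exists_eq_map_fin (hcard.trans hN)
  refine ⟨z, ?_⟩
  rw [← prod_map_val, ← Function.comp_def (fun a => X - C a), ← Multiset.map_map, ← hz,
    prod_multiset_X_sub_C_of_monic_of_roots_card_eq hp hcard]

theorem roots_prod_X_sub_C_fin {k : Type*} [Field k] {N : ℕ} (z : Fin N → k) :
    (∏ j, (X - C (z j))).roots = univ.val.map z := by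
  rw [← roots_multiset_prod_X_sub_C (univ.val.map z), Multiset.map_map]
  rfl

theorem Monic.norm_lt_sum_norm_coeff_add_one {K : Type*} [NormedField K] {p : K[X]}
    (hp : p.Monic) {z : K} (hz : p.IsRoot z) :
    ‖z‖ < ∑ i ∈ range p.natDegree, ‖p.coeff i‖ + 1 := by
  have h := hz.norm_lt_cauchyBound hp.ne_zero
  have hsup : (range p.natDegree).sup (‖p.coeff ·‖₊) ≤ ∑ i ∈ range p.natDegree, ‖p.coeff i‖₊ :=
    Finset.sup_le fun i hi => single_le_sum (f := (‖p.coeff ·‖₊)) (fun j _ => zero_le) hi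
  rw [cauchyBound, hp.leadingCoeff, nnnorm_one, div_one] at h
  have h' : ‖z‖₊ < ∑ i ∈ range p.natDegree, ‖p.coeff i‖₊ + 1 := h.trans_le (by gcongr)
  rw [← NNReal.coe_lt_coe] at h'
  simpa using h'

theorem exists_subseq_tendsto_of_tendsto_coeff_prod {N : ℕ} {z : ℕ → Fin N → ℂ} {q : ℂ[X]}
    (h : ∀ i, Tendsto (fun n => (∏ j, (X - C (z n j))).coeff i) atTop (𝓝 (q.coeff i))) :
    ∃ w : Fin N → ℂ, q = ∏ j, (X - C (w j)) ∧
      ∃ φ : ℕ → ℕ, StrictMono φ ∧ Tendsto (z ∘ φ) atTop (𝓝 w) := by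
  set p := fun n => ∏ j, (X - C (z n j))
  have hmon : ∀ n, (p n).Monic := fun n =>
    monic_prod_of_monic univ (fun j => X - C (z n j)) fun j _ => monic_X_sub_C _
  have hdeg : ∀ n, (p n).natDegree = N := fun n => by
    simp [p, natDegree_prod_of_monic univ (fun j => X - C (z n j)) fun j _ => monic_X_sub_C _]
  obtain ⟨B, hB⟩ : BddAbove (Set.range fun n => ∑ i ∈ range N, ‖(p n).coeff i‖) :=
    (tendsto_finsetSum _ fun i _ => (h i).norm).bddAbove_range
  have hbdd : ∀ n, z n ∈ Metric.closedBall 0 (B + 1) := fun n => by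
    have hB0 : 0 ≤ B := (sum_nonneg fun i _ => norm_nonneg _).trans (hB ⟨0, rfl⟩)
    rw [mem_closedBall_zero_iff, pi_norm_le_iff_of_nonneg (by linarith)]
    intro j
    have hroot : (p n).IsRoot (z n j) := by
      simp [p, IsRoot, eval_prod, prod_eq_zero (mem_univ j)]
    have := (hmon n).norm_lt_sum_norm_coeff_add_one hroot
    rw [hdeg] at this
    linarith [hB ⟨n, rfl⟩]
  obtain ⟨w, -, φ, hφ, hw⟩ := tendsto_subseq_of_bounded Metric.isBounded_closedBall hbdd
  exact ⟨w, ext fun i => tendsto_nhds_unique ((h i).comp hφ.tendsto_atTop)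
    (tendsto_coeff_prod_X_sub_C hw i), φ, hφ, hw⟩

theorem frequently_card_filter_roots_eq {N : ℕ} {p : ℕ → ℂ[X]} {q : ℂ[X]} {r : ℝ}
    (hmon : ∀ n, (p n).Monic) (hdeg : ∀ n, (p n).natDegree = N)
    (hcoeff : ∀ i, Tendsto (fun n => (p n).coeff i) atTop (𝓝 (q.coeff i)))
    (hr : ∀ z ∈ q.roots, ‖z‖ ≠ r) :
    ∃ᶠ n in atTop,
      ((p n).roots.filter (‖·‖ < r)).card = (q.roots.filter (‖·‖ < r)).card := by
  choose z hz using fun n => exists_eq_prod_X_sub_C (hmon n) (hdeg n)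
  simp only [hz] at hcoeff
  obtain ⟨w, rfl, φ, hφ, hw⟩ := exists_subseq_tendsto_of_tendsto_coeff_prod hcoeff
  rw [roots_prod_X_sub_C_fin] at hr
  have hev : ∀ᶠ n in atTop, ∀ j, (‖z (φ n) j‖ < r ↔ ‖w j‖ < r) :=
    eventually_all.mpr fun j => (tendsto_pi_nhds.mp hw j).eventually_norm_lt_iff
      (hr _ (Multiset.mem_map_of_mem _ (mem_univ j)))
  refine hφ.tendsto_atTop.frequently (hev.mono fun n hn => ?_).frequently
  rw [hz, roots_prod_X_sub_C_fin, roots_prod_X_sub_C_fin, Multiset.filter_map,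
    Multiset.filter_map, Multiset.card_map, Multiset.card_map]
  exact congrArg _ (Multiset.filter_congr fun j _ => hn j)

theorem continuousAt_card_filter_roots {T : Type*} [TopologicalSpace T]
    [FirstCountableTopology T] {P : T → ℂ[X]} {N : ℕ} {x₀ : T} {r : ℝ}
    (hmon : ∀ x, (P x).Monic) (hdeg : ∀ x, (P x).natDegree = N)
    (hcoeff : ∀ i, ContinuousAt (fun x => (P x).coeff i) x₀)
    (hr : ∀ z ∈ (P x₀).roots, ‖z‖ ≠ r) :
    ContinuousAt (fun x => ((P x).roots.filter (‖·‖ < r)).card) x₀ := by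
  rw [ContinuousAt, nhds_discrete ℕ, tendsto_pure]
  by_contra hne
  obtain ⟨x, hx, hxne⟩ := exists_seq_forall_of_frequently (not_eventually.mp hne)
  obtain ⟨n, hn⟩ := (frequently_card_filter_roots_eq (fun n => hmon (x n))
    (fun n => hdeg (x n)) (fun i => (hcoeff i).tendsto.comp hx) hr).exists
  exact hxne n hn

end Polynomial

section Epoly

variable {g d : ℕ} {a : ℤ → ℝ}

theorem phiF_nonneg (ha : ∀ k ∈ Icc (-(g : ℤ)) d, 0 ≤ a k) {t : ℝ} (ht : 0 ≤ t) :
    0 ≤ phiF g d a t :=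
  sum_nonneg fun k hk => mul_nonneg (ha k hk) (zpow_nonneg ht k)

theorem continuous_coeff_Epoly (i : ℕ) : Continuous fun lam => (Epoly g d a lam).coeff i := by
  simp only [Epoly, coeff_sub, coeff_C_mul]
  fun_prop

theorem coeff_Epoly_add (hd : 0 < d) (lam : ℂ) : (Epoly g d a lam).coeff (g + d) = a d := by
  have hsum : ∀ k ∈ Icc (-(g : ℤ)) d, k ≠ d →
      (C (a k : ℂ) * X ^ ((g : ℤ) + k).toNat).coeff (g + d) = 0 := fun k hk hkd => by
    rw [mem_Icc] at hk
    rw [coeff_C_mul, coeff_X_pow, if_neg (by omega), mul_zero]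
  rw [Epoly, coeff_sub, finsetSum_coeff, sum_eq_single_of_mem (d : ℤ) (by simp) hsum,
    coeff_C_mul, coeff_X_pow, if_pos (by omega), mul_one, coeff_C_mul, coeff_X_pow,
    if_neg (by omega), mul_zero, sub_zero]

theorem natDegree_Epoly_le (lam : ℂ) : (Epoly g d a lam).natDegree ≤ g + d := by
  refine (natDegree_sub_le _ _).trans (max_le ?_ ?_)
  · refine natDegree_sum_le_of_forall_le _ _ fun k hk => (natDegree_C_mul_le _ _).trans ?_
    rw [mem_Icc] at hk
    rw [natDegree_X_pow]
    omega
  · exact (natDegree_C_mul_le _ _).trans (by rw [natDegree_X_pow]; omega)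

theorem natDegree_Epoly (hd : 0 < d) (had : a d ≠ 0) (lam : ℂ) :
    (Epoly g d a lam).natDegree = g + d :=
  natDegree_eq_of_le_of_coeff_ne_zero (natDegree_Epoly_le lam)
    (by rw [coeff_Epoly_add hd]; exact_mod_cast had)

theorem leadingCoeff_Epoly (hd : 0 < d) (had : a d ≠ 0) (lam : ℂ) :
    (Epoly g d a lam).leadingCoeff = a d := by
  rw [leadingCoeff, natDegree_Epoly hd had, coeff_Epoly_add hd]

theorem not_isRoot_Epoly_of_norm_eq (ha : ∀ k ∈ Icc (-(g : ℤ)) d, 0 ≤ a k) {γ : ℝ}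
    (hγ : 0 < γ) {lam z : ℂ} (hlam : phiF g d a γ < ‖lam‖) (hz : ‖z‖ = γ) :
    ¬ (Epoly g d a lam).IsRoot z := by
  intro hroot
  have heval : lam * z ^ g = ∑ k ∈ Icc (-(g : ℤ)) d, (a k : ℂ) * z ^ ((g : ℤ) + k).toNat := by
    rw [IsRoot, Epoly, eval_sub, sub_eq_zero] at hroot
    simpa [eval_finsetSum] using hroot.symm
  have hpow : ∀ k ∈ Icc (-(g : ℤ)) d, γ ^ ((g : ℤ) + k).toNat = γ ^ g * γ ^ k := fun k hk => by
    rw [mem_Icc] at hk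
    rw [← zpow_natCast, Int.toNat_of_nonneg (by omega), zpow_add₀ hγ.ne', zpow_natCast]
  have hle : ‖lam * z ^ g‖ ≤ γ ^ g * phiF g d a γ := by
    calc ‖lam * z ^ g‖
        ≤ ∑ k ∈ Icc (-(g : ℤ)) d, ‖(a k : ℂ) * z ^ ((g : ℤ) + k).toNat‖ :=
          heval ▸ norm_sum_le _ _
      _ = γ ^ g * phiF g d a γ := by
          rw [phiF, mul_sum]
          refine sum_congr rfl fun k hk => ?_
          rw [norm_mul, norm_pow, hz, hpow k hk, Complex.norm_real, Real.norm_of_nonneg (ha k hk)]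
          ring
  rw [norm_mul, norm_pow, hz] at hle
  nlinarith [pow_pos hγ g]

theorem continuousAt_Ncount (hd : 0 < d) (had : a d ≠ 0) (ha : ∀ k ∈ Icc (-(g : ℤ)) d, 0 ≤ a k)
    {γ : ℝ} (hγ : 0 < γ) {lam₀ : ℂ} (hlam₀ : phiF g d a γ < ‖lam₀‖) :
    ContinuousAt (Ncount g d a γ) lam₀ := by
  have hc : ((a d : ℂ))⁻¹ ≠ 0 := inv_ne_zero (by exact_mod_cast had)
  set P := fun lam => C ((a d : ℂ))⁻¹ * Epoly g d a lam
  have hroots : ∀ lam, (P lam).roots = (Epoly g d a lam).roots := fun lam => roots_C_mul _ hc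
  have hmon : ∀ lam, (P lam).Monic := fun lam => monic_C_mul_of_mul_leadingCoeff_eq_one
    (by rw [leadingCoeff_Epoly hd had]; exact inv_mul_cancel₀ (by exact_mod_cast had))
  have hdeg : ∀ lam, (P lam).natDegree = g + d := fun lam => by
    rw [natDegree_C_mul hc, natDegree_Epoly hd had]
  have hcoeff : ∀ i, ContinuousAt (fun lam => (P lam).coeff i) lam₀ := fun i => by
    simp only [P, coeff_C_mul]
    exact ((continuous_coeff_Epoly i).const_mul _).continuousAt
  have hr : ∀ z ∈ (P lam₀).roots, ‖z‖ ≠ γ := fun z hz hzγ => by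
    rw [hroots] at hz
    exact not_isRoot_Epoly_of_norm_eq ha hγ hlam₀ hzγ (isRoot_of_mem_roots hz)
  unfold Ncount
  simpa only [hroots] using continuousAt_card_filter_roots hmon hdeg hcoeff hr

end Epoly

theorem Ncount_constant_on_annulus_general
    (g d : ℕ) (hd : 1 ≤ d) (a : ℤ → ℝ)
    (ha01 : ∀ k ∈ Finset.Icc (-(g : ℤ)) (d : ℤ), 0 ≤ a k ∧ a k ≤ 1)
    (had : 0 < a (d : ℤ))
    (γhat : ℝ) (hγhat1 : 1 < γhat) :
    ∀ lam₁ lam₂ : ℂ,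
      phiF g d a γhat < ‖lam₁‖ → ‖lam₁‖ < 1 →
      phiF g d a γhat < ‖lam₂‖ → ‖lam₂‖ < 1 →
      Ncount g d a γhat lam₁ = Ncount g d a γhat lam₂ := by
  intro lam₁ lam₂ h₁ h₁' h₂ h₂'
  have ha : ∀ k ∈ Icc (-(g : ℤ)) d, 0 ≤ a k := fun k hk => (ha01 k hk).1
  have hγ : 0 < γhat := one_pos.trans hγhat1
  have hconn := isPreconnected_annulus (E := ℂ) (R := 1)
    (by rw [Complex.rank_real_complex]; norm_num) (phiF_nonneg ha hγ.le)
  exact hconn.constant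
    (fun lam hlam => (continuousAt_Ncount hd had.ne' ha hγ hlam.1).continuousWithinAt)
    ⟨h₁, h₁'⟩ ⟨h₂, h₂'⟩

/-- the root-counting function `N(·)` is constant on the annulus
`Λ = {λ : δ̂ < |λ| < 1}`, where `γ̂` is the minimizer of `φ` on `(1,∞)` and
`δ̂ := φ(γ̂)`. -/
theorem Ncount_constant_on_annulus
    (g d : ℕ) (hg : 1 ≤ g) (hd : 1 ≤ d) (a : ℤ → ℝ)
    (ha01 : ∀ k ∈ Finset.Icc (-(g : ℤ)) (d : ℤ), 0 ≤ a k ∧ a k ≤ 1)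
    (hag : 0 < a (-(g : ℤ))) (had : 0 < a (d : ℤ))
    (hsum : ∑ k ∈ Finset.Icc (-(g : ℤ)) (d : ℤ), a k = 1)
    (hneri : ∑ k ∈ Finset.Icc (-(g : ℤ)) (d : ℤ), (k : ℝ) * a k < 0)
    (γhat : ℝ) (hγhat1 : 1 < γhat)
    (hγhatmin : ∀ t : ℝ, 1 < t → phiF g d a γhat ≤ phiF g d a t) :
    ∀ lam₁ lam₂ : ℂ,
      phiF g d a γhat < ‖lam₁‖ → ‖lam₁‖ < 1 →
      phiF g d a γhat < ‖lam₂‖ → ‖lam₂‖ < 1 →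
      Ncount g d a γhat lam₁ = Ncount g d a γhat lam₂ :=
  Ncount_constant_on_annulus_general g d hd a ha01 had γhat hγhat1
end

section
/- Let p,q,r ∈ [0,1] with p+q+r = 1 and 0 < q < p, let a ∈ (0,1) with a + q ≠ 1, and let P be the birth-and-death stochastic matrix on ℕ with P(0,0)=a, P(0,1)=1−a and, for n ≥ 1, P(n,n−1)=p, P(n,n)=r, P(n,n+1)=q. Set z(a) := p/(a+q−1) and λ(a) := a + p(1−a)/(a−1+q). Then the sequence f(n) := z(a)^n satisfies (Pf)(n) = λ(a) f(n) for every n ∈ ℕ, i.e. λ(a) f(0) = a f(0) + (1−a) f(1) and λ(a) f(n) = p f(n−1) + r f(n) + q f(n+1) for all n ≥ 1. Moreover |z(a)| ≤ √(p/q) if and only if |a−1+q| ≥ √(pq). -/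
/-- for the birth-and-death chain with boundary parameter `a` such that
`a + q ≠ 1`, the sequence `f(n) = z(a)^n` with `z(a) = p/(a+q-1)` satisfies
`(Pf)(n) = λ(a) f(n)` for all `n`, where `λ(a) = a + p(1-a)/(a-1+q)`; moreover
`|z(a)| ≤ √(p/q)` iff `|a-1+q| ≥ √(pq)`. -/
theorem bd_eigenvector_computation
    (p q r a : ℝ)
    (hp0 : 0 ≤ p) (hp1 : p ≤ 1) (hq1 : q ≤ 1) (hr0 : 0 ≤ r) (hr1 : r ≤ 1)
    (hsum : p + q + r = 1) (hq : 0 < q) (hqp : q < p)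
    (ha0 : 0 < a) (ha1 : a < 1) (hne : a + q ≠ 1) :
    ((a + p * (1 - a) / (a - 1 + q)) * (p / (a + q - 1)) ^ (0 : ℕ)
        = a * (p / (a + q - 1)) ^ (0 : ℕ) + (1 - a) * (p / (a + q - 1)) ^ (1 : ℕ))
    ∧ (∀ n : ℕ, 1 ≤ n →
        (a + p * (1 - a) / (a - 1 + q)) * (p / (a + q - 1)) ^ n
          = p * (p / (a + q - 1)) ^ (n - 1) + r * (p / (a + q - 1)) ^ n
            + q * (p / (a + q - 1)) ^ (n + 1))
    ∧ (|p / (a + q - 1)| ≤ Real.sqrt (p / q) ↔ Real.sqrt (p * q) ≤ |a - 1 + q|) := by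
  have hd : a + q - 1 ≠ 0 := by intro h; apply hne; linarith
  have hd' : a - 1 + q ≠ 0 := by intro h; apply hne; linarith
  refine ⟨?_, ?_, ?_⟩
  · field_simp
    ring
  · intro n hn
    obtain ⟨m, rfl⟩ := Nat.exists_eq_add_of_le hn
    have hkey : (a + p * (1 - a) / (a - 1 + q)) * (p / (a + q - 1))
        = p + r * (p / (a + q - 1)) + q * (p / (a + q - 1)) ^ 2 := by
      have hr' : r = 1 - p - q := by linarith
      subst hr'
      field_simp
      ring
    have : (a + p * (1 - a) / (a - 1 + q)) * (p / (a + q - 1)) ^ (1 + m)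
        = ((a + p * (1 - a) / (a - 1 + q)) * (p / (a + q - 1))) * (p / (a + q - 1)) ^ m := by
      rw [pow_add, pow_one]; ring
    rw [this, hkey]
    simp only [Nat.add_sub_cancel_left]
    rw [pow_add, pow_add, pow_one]
    ring_nf
  · have hp : 0 < p := lt_trans hq hqp
    have habs : 0 < |a + q - 1| := abs_pos.mpr hd
    have heq : a - 1 + q = a + q - 1 := by ring
    rw [heq]
    have h1 : |p / (a + q - 1)| = p / |a + q - 1| := by
      rw [abs_div, abs_of_pos hp]
    rw [h1]
    rw [Real.le_sqrt (by positivity) (by positivity)]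
    constructor
    · intro h
      rw [show Real.sqrt (p * q) = Real.sqrt (p * q) from rfl]
      have h2 : (p / |a + q - 1|) ^ 2 = p ^ 2 / |a + q - 1| ^ 2 := by
        rw [div_pow]
      rw [h2, div_le_div_iff₀ (by positivity) hq] at h
      have hpq : p * q ≤ |a + q - 1| ^ 2 := by nlinarith
      calc Real.sqrt (p * q) ≤ Real.sqrt (|a + q - 1| ^ 2) := Real.sqrt_le_sqrt hpq
        _ = |a + q - 1| := by rw [Real.sqrt_sq (abs_nonneg _)]
    · intro h
      have h2 : p * q ≤ |a + q - 1| ^ 2 := by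
        have := Real.sq_sqrt (by positivity : (0:ℝ) ≤ p * q)
        nlinarith [Real.sqrt_nonneg (p * q)]
      rw [div_pow, div_le_div_iff₀ (by positivity) hq]
      nlinarith
end

section
/- Let p ∈ (0,1), q = 1−p, and let (q_n)_{n≥1} ⊂ [0,1] with ∑_{n≥1} q_n = 1. Let P be the stochastic matrix on ℕ with P(0,n) = q_n for n ≥ 1, and P(n,0) = p, P(n,n+1) = q for n ≥ 1. Let γ ∈ (1,1/q) with ∑_{n≥1} q_n γ^n < ∞. Suppose λ ∈ ℂ with max(qγ, p) < |λ| ≤ 1 and f : ℕ → ℂ is nonzero with sup_n |f(n)|/γ^n < ∞ and ∑_j P(i,j) f(j) = λ f(i) for all i ∈ ℕ. Then λ = 1 and f is constant. -/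
/-! On the states `n ≥ 1` the eigenvalue equation is the affine recurrence
`q f(n+1) = λ f(n) - p f(0)`, whose solutions are `K + (λ/q)^n (f(1) - K)` with the fixed point
`K = p f(0) / (λ - q)`. Since `|λ/q| > γ`, the growth bound `|f(n)| ≤ C γ^n` kills the geometric
part, so `f` is constant `K` on `n ≥ 1`. The equation at `0` then reads `K = λ f(0)`, and
eliminating `K` gives `λ² - qλ - p = (λ - 1)(λ + p) = 0`; as `|λ| > p`, `λ = 1`. -/

/-- Action of an infinite matrix `P` on functions `f : ℕ → ℂ`: `(Pf)(i) = ∑_j P(i,j) f(j)`. -/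
noncomputable def matActC (P : ℕ → ℕ → ℝ) (f : ℕ → ℂ) : ℕ → ℂ :=
  fun i => ∑' j, (P i j : ℂ) * f j

lemma matActC_eq_of_row_support_pair {P : ℕ → ℕ → ℝ} {f : ℕ → ℂ} {i a b : ℕ} (hab : a ≠ b)
    (hP : ∀ j, j ≠ a → j ≠ b → P i j = 0) :
    matActC P f i = P i a * f a + P i b * f b := by
  rw [matActC, tsum_eq_sum (s := {a, b}), Finset.sum_pair hab]
  intro j hj
  simp only [Finset.mem_insert, Finset.mem_singleton, not_or] at hj
  simp [hP j hj.1 hj.2]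

lemma matActC_eq_of_row_eq_ite {P : ℕ → ℕ → ℝ} {f : ℕ → ℂ} {n : ℕ} {p q : ℝ}
    (hP : ∀ j, P n j = if j = 0 then p else if j = n + 1 then q else 0) :
    matActC P f n = p * f 0 + q * f (n + 1) := by
  rw [matActC_eq_of_row_support_pair (Nat.succ_ne_zero n).symm fun j hj0 hjn => by
    rw [hP, if_neg hj0, if_neg hjn], hP, hP, if_pos rfl, if_neg (Nat.succ_ne_zero n), if_pos rfl]

lemma matActC_eq_of_hasSum_row {P : ℕ → ℕ → ℝ} {f : ℕ → ℂ} {i : ℕ} {K : ℂ}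
    (hP : HasSum (P i) 1) (hf : ∀ j, P i j ≠ 0 → f j = K) :
    matActC P f i = K := by
  have hrow : (fun j => (P i j : ℂ) * f j) = fun j => (P i j : ℂ) * K := by
    funext j
    by_cases hj : P i j = 0
    · simp [hj]
    · rw [hf j hj]
  simpa [matActC, hrow] using ((Complex.hasSum_ofReal.mpr hP).mul_right K).tsum_eq

lemma sub_div_sub_eq_pow_mul_of_recurrence {𝕜 : Type*} [Field 𝕜] {u : ℕ → 𝕜} {a b c : 𝕜}
    (ha : a ≠ 0) (hca : c - a ≠ 0) (h : ∀ n, a * u (n + 1) = c * u n - b) (n : ℕ) :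
    u n - b / (c - a) = (c / a) ^ n * (u 0 - b / (c - a)) := by
  induction n with
  | zero => simp
  | succ n ih =>
    rw [pow_succ', mul_assoc, ← ih]
    field_simp
    linear_combination (c - a) * h n

lemma eq_zero_of_norm_pow_mul_le {𝕜 : Type*} [NormedDivisionRing 𝕜] {ρ x : 𝕜} {γ C : ℝ}
    (hγ : 0 < γ) (hρ : γ < ‖ρ‖) (h : ∀ n, ‖ρ ^ n * x‖ ≤ C * γ ^ n) : x = 0 := by
  by_contra hx
  have hx' : 0 < ‖x‖ := norm_pos_iff.mpr hx
  obtain ⟨n, hn⟩ := pow_unbounded_of_one_lt (C / ‖x‖) ((one_lt_div hγ).mpr hρ)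
  have hγn : 0 < γ ^ n := pow_pos hγ n
  have : (‖ρ‖ / γ) ^ n * ‖x‖ ≤ C := by
    rw [div_pow, div_mul_eq_mul_div, div_le_iff₀ hγn, ← norm_pow, ← norm_mul]
    exact h n
  rw [div_lt_iff₀ hx'] at hn
  linarith

lemma eq_of_recurrence_of_norm_le {𝕜 : Type*} [NormedField 𝕜] {u : ℕ → 𝕜} {a b c : 𝕜}
    {γ C : ℝ} (ha : a ≠ 0) (h : ∀ n, a * u (n + 1) = c * u n - b)
    (hγ : 1 ≤ γ) (hγca : γ < ‖c / a‖) (hu : ∀ n, ‖u n‖ ≤ C * γ ^ n) (n : ℕ) :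
    u n = b / (c - a) := by
  set K := b / (c - a)
  have hca : c - a ≠ 0 := fun hca => by
    rw [sub_eq_zero.mp hca, div_self ha, norm_one] at hγca
    linarith
  have hgeo := sub_div_sub_eq_pow_mul_of_recurrence ha hca h
  suffices u 0 - K = 0 by rw [← sub_eq_zero, hgeo, this, mul_zero]
  refine eq_zero_of_norm_pow_mul_le (by linarith) hγca (C := C + ‖K‖) fun n => ?_
  have hγn : 1 ≤ γ ^ n := one_le_pow₀ hγ
  calc ‖(c / a) ^ n * (u 0 - K)‖ = ‖u n - K‖ := by rw [hgeo n]
    _ ≤ ‖u n‖ + ‖K‖ := norm_sub_le _ _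
    _ ≤ C * γ ^ n + ‖K‖ * γ ^ n := add_le_add (hu n) (le_mul_of_one_le_right (norm_nonneg K) hγn)
    _ = (C + ‖K‖) * γ ^ n := by ring

lemma eq_one_of_mul_sub_one_sub_eq {lam : ℂ} {p : ℝ} (hp : 0 ≤ p) (hlam : p < ‖lam‖)
    (h : lam * (lam - (1 - p)) = p) : lam = 1 := by
  have hfac : (lam - 1) * (lam + p) = 0 := by linear_combination h
  refine sub_eq_zero.mp ((mul_eq_zero.mp hfac).resolve_right fun hneg => ?_)
  rw [add_eq_zero_iff_eq_neg.mp hneg, norm_neg, Complex.norm_real, Real.norm_of_nonneg hp] at hlam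
  exact lt_irrefl p hlam

theorem unbounded_rw_eigenvalue_general
    (p q : ℝ) (hp0 : 0 < p) (hp1 : p < 1) (hpq : q = 1 - p)
    (qseq : ℕ → ℝ)
    (hqsum : HasSum (fun n : ℕ => qseq (n + 1)) 1)
    (P : ℕ → ℕ → ℝ)
    (hP00 : P 0 0 = 0) (hP0 : ∀ n, 1 ≤ n → P 0 n = qseq n)
    (hPn : ∀ n : ℕ, 1 ≤ n → ∀ j, P n j = if j = 0 then p else if j = n + 1 then q else 0)
    (γ : ℝ) (hγ1 : 1 < γ)
    (lam : ℂ) (hlam1 : max (q * γ) p < ‖lam‖)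
    (f : ℕ → ℂ) (hf0 : f ≠ 0)
    (hfb : ∃ C : ℝ, ∀ n, ‖f n‖ ≤ C * γ ^ n)
    (heig : ∀ i, matActC P f i = lam * f i) :
    lam = 1 ∧ ∀ m n, f m = f n := by
  obtain ⟨C, hC⟩ := hfb
  have hq : 0 < q := by linarith
  have hγlam : γ < ‖lam / q‖ := by
    rw [norm_div, Complex.norm_real, Real.norm_of_nonneg hq.le, lt_div_iff₀ hq, mul_comm]
    exact (le_max_left _ _).trans_lt hlam1
  have hrec (n : ℕ) : (q : ℂ) * f (n + 2) = lam * f (n + 1) - p * f 0 := by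
    linear_combination (matActC_eq_of_row_eq_ite (f := f) (hPn (n + 1) (by omega))).symm.trans
      (heig (n + 1))
  set K := p * f 0 / (lam - q)
  have htail (n : ℕ) : f (n + 1) = K :=
    eq_of_recurrence_of_norm_le (u := fun n => f (n + 1)) (C := C * γ)
      (Complex.ofReal_ne_zero.mpr hq.ne') hrec hγ1.le hγlam
      (fun n => by simpa [pow_succ', mul_assoc] using hC (n + 1)) n
  have hrow0 : HasSum (P 0) 1 := (hasSum_nat_add_iff' 1).mp (by simpa [hP00, hP0] using hqsum)
  have hK : lam * f 0 = K := by
    rw [← heig 0]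
    refine matActC_eq_of_hasSum_row hrow0 ?_
    rintro (_ | n) hn
    exacts [absurd hP00 hn, htail n]
  have hf00 : f 0 ≠ 0 := fun h0 => hf0 <| funext fun
    | 0 => h0
    | n + 1 => by rw [htail n, ← hK, h0, mul_zero, Pi.zero_apply]
  have hlam : lam = 1 := by
    refine eq_one_of_mul_sub_one_sub_eq hp0.le ((le_max_right _ _).trans_lt hlam1)
      (mul_right_cancel₀ hf00 ?_)
    have hqC : (q : ℂ) = 1 - p := by simp [hpq]
    linear_combination (lam - (1 - p)) * hK - hrec 0 - lam * htail 0 + q * htail 1 + K * hqC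
  have hconst : ∀ n, f n = f 0
    | 0 => rfl
    | n + 1 => by rw [htail n, ← hK, hlam, one_mul]
  exact ⟨hlam, fun m n => by rw [hconst m, hconst n]⟩

/-- for the non-reversible random walk with unbounded increments, any
eigenvalue `λ` of `P` on `B_γ` with `max(qγ,p) < |λ| ≤ 1` equals `1`, and the
corresponding eigenfunctions are constant. -/
theorem unbounded_rw_eigenvalue
    (p q : ℝ) (hp0 : 0 < p) (hp1 : p < 1) (hpq : q = 1 - p)
    (qseq : ℕ → ℝ)
    (hq01 : ∀ n, 1 ≤ n → 0 ≤ qseq n ∧ qseq n ≤ 1)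
    (hqsum : HasSum (fun n : ℕ => qseq (n + 1)) 1)
    (P : ℕ → ℕ → ℝ)
    (hP00 : P 0 0 = 0) (hP0 : ∀ n, 1 ≤ n → P 0 n = qseq n)
    (hPn : ∀ n : ℕ, 1 ≤ n → ∀ j, P n j = if j = 0 then p else if j = n + 1 then q else 0)
    (γ : ℝ) (hγ1 : 1 < γ) (hγq : γ < 1 / q)
    (hmom : Summable (fun n : ℕ => qseq (n + 1) * γ ^ (n + 1)))
    (lam : ℂ) (hlam1 : max (q * γ) p < ‖lam‖) (hlam2 : ‖lam‖ ≤ 1)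
    (f : ℕ → ℂ) (hf0 : f ≠ 0)
    (hfb : ∃ C : ℝ, ∀ n, ‖f n‖ ≤ C * γ ^ n)
    (heig : ∀ i, matActC P f i = lam * f i) :
    lam = 1 ∧ ∀ m n, f m = f n :=
  unbounded_rw_eigenvalue_general p q hp0 hp1 hpq qseq hqsum P hP00 hP0 hPn γ hγ1 lam hlam1 f hf0
    hfb heig
end

section
/- Let (π_n)_{n∈ℕ} be a probability distribution on ℕ with π_n > 0 for every n, and let P be the stochastic matrix on ℕ with P(0,n) = π_n for all n ∈ ℕ and, for n ≥ 1, P(n,0) = π_0 and P(n,n) = 1−π_0. Let V : ℕ → [1,∞) with V(0) = 1, lim_{n→∞} V(n) = +∞ and π(V) := ∑_n π_n V(n) < ∞. Then π is an invariant probability distribution of P, and P is V-geometrically ergodic with ρ_V(P) ≤ 1 − π_0; that is, for every ρ with 1−π_0 < ρ < 1 there exists C > 0 such that for all n ∈ ℕ and all f with ‖f‖_V ≤ 1, ‖P^n f − π(f)·1‖_V ≤ C ρ^n. -/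
theorem tsum_eq_add_of_eq_zero_of_ne {β M : Type*} [AddCommMonoid M] [TopologicalSpace M]
    {g : β → M} {a b : β} (hab : a ≠ b) (hg : ∀ j, j ≠ a → j ≠ b → g j = 0) :
    ∑' j, g j = g a + g b := by
  classical
  rw [tsum_eq_sum (s := {a, b}) (by simpa [not_or] using hg), Finset.sum_pair hab]

theorem hasSum_nat_succ_iff {M : Type*} [AddCommGroup M] [TopologicalSpace M]
    [IsTopologicalAddGroup M] {f : ℕ → M} {a : M} :
    HasSum (fun n => f (n + 1)) (a - f 0) ↔ HasSum f a := by
  simpa using hasSum_nat_add_iff' (f := f) (g := a) 1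

theorem norm_ofReal_mul_le_mul {p v : ℝ} {z : ℂ} (hp : 0 ≤ p) (hz : ‖z‖ ≤ v) :
    ‖(p : ℂ) * z‖ ≤ p * v := by
  rw [norm_mul, Complex.norm_of_nonneg hp]
  exact mul_le_mul_of_nonneg_left hz hp

theorem norm_le_of_hasSum_ofReal_mul {π V : ℕ → ℝ} {f : ℕ → ℂ} {s : ℝ} {c : ℂ}
    (hπ : ∀ n, 0 ≤ π n) (hfV : ∀ n, ‖f n‖ ≤ V n) (hV : HasSum (fun n => π n * V n) s)
    (hf : HasSum (fun n => (π n : ℂ) * f n) c) : ‖c‖ ≤ s :=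
  hf.norm_le_of_bounded hV fun n => norm_ofReal_mul_le_mul (hπ n) (hfV n)

structure IsStarWalk (π : ℕ → ℝ) (P : ℕ → ℕ → ℝ) : Prop where
  row_zero : ∀ n, P 0 n = π n
  row_of_pos : ∀ n : ℕ, 1 ≤ n → ∀ j,
    P n j = if j = 0 then π 0 else if j = n then 1 - π 0 else 0

namespace IsStarWalk

variable {π : ℕ → ℝ} {P : ℕ → ℕ → ℝ}

theorem tsum_mul_apply (hP : IsStarWalk π P) (hπ : HasSum π 1) (j : ℕ) :
    ∑' i, π i * P i j = π j := by
  rcases Nat.eq_zero_or_pos j with rfl | hj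
  · have h : ∀ i, π i * P i 0 = π 0 * π i := by
      rintro (_ | i)
      · rw [hP.row_zero]
      · simp [hP.row_of_pos (i + 1) i.succ_pos, mul_comm]
    rw [tsum_congr h, tsum_mul_left, hπ.tsum_eq, mul_one]
  · rw [tsum_eq_add_of_eq_zero_of_ne hj.ne (fun i hi0 hij => by
      simp [hP.row_of_pos i (Nat.one_le_iff_ne_zero.2 hi0), hj.ne', Ne.symm hij]),
      hP.row_zero, hP.row_of_pos j hj, if_neg hj.ne', if_pos rfl]
    ring

theorem matActC_zero (hP : IsStarWalk π P) (g : ℕ → ℂ) :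
    matActC P g 0 = ∑' j, (π j : ℂ) * g j := by
  simp only [matActC, hP.row_zero]

theorem matActC_of_ne_zero (hP : IsStarWalk π P) {m : ℕ} (hm : m ≠ 0) (g : ℕ → ℂ) :
    matActC P g m = π 0 * g 0 + (1 - π 0) * g m := by
  have hPm := hP.row_of_pos m (Nat.one_le_iff_ne_zero.2 hm)
  rw [matActC, tsum_eq_add_of_eq_zero_of_ne (Ne.symm hm)
      (fun j hj0 hjm => by simp [hPm, hj0, hjm]),
    hPm, hPm, if_pos rfl, if_neg hm, if_pos rfl]
  push_cast
  ring

theorem hasSum_mul_matActC (hP : IsStarWalk π P) (hπ : HasSum π 1) {g : ℕ → ℂ} {c : ℂ}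
    (hg : HasSum (fun i => (π i : ℂ) * g i) c) :
    HasSum (fun i => (π i : ℂ) * matActC P g i) c := by
  have hπ_tail : HasSum (fun n => (π (n + 1) : ℂ)) (1 - π 0) :=
    hasSum_nat_succ_iff.2 (Complex.hasSum_ofReal.2 hπ)
  have hg_tail := hasSum_nat_succ_iff.2 hg
  refine hasSum_nat_succ_iff.1 ?_
  rw [hP.matActC_zero, hg.tsum_eq,
    show c - π 0 * c = π 0 * g 0 * (1 - π 0) + (1 - π 0) * (c - π 0 * g 0) by ring]
  refine ((hπ_tail.mul_left (π 0 * g 0)).add (hg_tail.mul_left (1 - (π 0 : ℂ)))).congr_fun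
    fun n => ?_
  rw [hP.matActC_of_ne_zero n.succ_ne_zero]
  ring

variable {f : ℕ → ℂ} {c : ℂ}

theorem hasSum_mul_iterate_matActC (hP : IsStarWalk π P) (hπ : HasSum π 1)
    (hf : HasSum (fun i => (π i : ℂ) * f i) c) (n : ℕ) :
    HasSum (fun i => (π i : ℂ) * (matActC P)^[n] f i) c := by
  induction n with
  | zero => exact hf
  | succ n ih =>
    simp only [Function.iterate_succ_apply']
    exact hP.hasSum_mul_matActC hπ ih

theorem iterate_matActC_succ_zero (hP : IsStarWalk π P) (hπ : HasSum π 1)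
    (hf : HasSum (fun i => (π i : ℂ) * f i) c) (n : ℕ) :
    (matActC P)^[n + 1] f 0 = c := by
  rw [Function.iterate_succ_apply', hP.matActC_zero,
    (hP.hasSum_mul_iterate_matActC hπ hf n).tsum_eq]

theorem iterate_matActC_succ_sub (hP : IsStarWalk π P) (hπ : HasSum π 1)
    (hf : HasSum (fun i => (π i : ℂ) * f i) c) {m : ℕ} (hm : m ≠ 0) (n : ℕ) :
    (matActC P)^[n + 1] f m - c = (1 - π 0) ^ n * (matActC P f m - c) := by
  induction n with
  | zero => simp
  | succ n ih =>
    rw [Function.iterate_succ_apply', hP.matActC_of_ne_zero hm,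
      hP.iterate_matActC_succ_zero hπ hf n]
    linear_combination (1 - (π 0 : ℂ)) * ih

theorem norm_iterate_matActC_succ_sub_le (hP : IsStarWalk π P) (hπ : HasSum π 1)
    (hπ_nonneg : ∀ n, 0 ≤ π n) {V : ℕ → ℝ} {s : ℝ} (hV : HasSum (fun n => π n * V n) s)
    (hfV : ∀ m, ‖f m‖ ≤ V m) (hf : HasSum (fun i => (π i : ℂ) * f i) c) (n m : ℕ) :
    ‖(matActC P)^[n + 1] f m - c‖ ≤ (1 - π 0) ^ n * (V m + 2 * s) := by
  have hπ0 : 0 ≤ 1 - π 0 := sub_nonneg.2 (le_hasSum hπ 0 fun j _ => hπ_nonneg j)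
  have hc : ‖c‖ ≤ s := norm_le_of_hasSum_ofReal_mul hπ_nonneg hfV hV hf
  rcases eq_or_ne m 0 with rfl | hm
  · rw [hP.iterate_matActC_succ_zero hπ hf, sub_self, norm_zero]
    have hs : 0 ≤ s := (norm_nonneg c).trans hc
    have hV0 : 0 ≤ V 0 := (norm_nonneg _).trans (hfV 0)
    positivity
  have hf0 : π 0 * ‖f 0‖ ≤ s :=
    (mul_le_mul_of_nonneg_left (hfV 0) (hπ_nonneg 0)).trans
      (le_hasSum hV 0 fun j _ => mul_nonneg (hπ_nonneg j) ((norm_nonneg _).trans (hfV j)))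
  have hfm : (1 - π 0) * ‖f m‖ ≤ V m := by
    nlinarith [hπ_nonneg 0, norm_nonneg (f m), hfV m]
  have hβ : ‖1 - (π 0 : ℂ)‖ = 1 - π 0 := by
    rw [← Complex.norm_of_nonneg hπ0]
    push_cast
    rfl
  rw [hP.iterate_matActC_succ_sub hπ hf hm, norm_mul, norm_pow, hβ, hP.matActC_of_ne_zero hm]
  gcongr
  calc ‖(π 0 : ℂ) * f 0 + (1 - π 0) * f m - c‖
      ≤ ‖(π 0 : ℂ) * f 0‖ + ‖(1 - (π 0 : ℂ)) * f m‖ + ‖c‖ :=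
        norm_sub_le_of_le (norm_add_le _ _) le_rfl
    _ = π 0 * ‖f 0‖ + (1 - π 0) * ‖f m‖ + ‖c‖ := by
      rw [norm_mul, norm_mul, hβ, Complex.norm_of_nonneg (hπ_nonneg 0)]
    _ ≤ V m + 2 * s := by linarith

end IsStarWalk

theorem star_rw_rate_general
    (π : ℕ → ℝ) (hπpos : ∀ n, 0 < π n) (hπsum : HasSum π 1)
    (P : ℕ → ℕ → ℝ)
    (hP0 : ∀ n, P 0 n = π n)
    (hPn : ∀ n : ℕ, 1 ≤ n → ∀ j, P n j = if j = 0 then π 0 else if j = n then 1 - π 0 else 0)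
    (V : ℕ → ℝ) (hV1 : ∀ n, 1 ≤ V n)
    (hπV : Summable (fun n => π n * V n)) :
    (∀ j, ∑' i, π i * P i j = π j)
    ∧ ∀ ρ : ℝ, 1 - π 0 < ρ → ρ < 1 →
        ∃ C : ℝ, 0 < C ∧ ∀ n : ℕ, ∀ f : ℕ → ℂ, (∀ m, ‖f m‖ ≤ V m) →
          ∀ m, ‖(matActC P)^[n] f m - ∑' i, (π i : ℂ) * f i‖ ≤ C * ρ ^ n * V m := by
  have hP : IsStarWalk π P := ⟨hP0, hPn⟩
  have hπ_nonneg : ∀ n, 0 ≤ π n := fun n => (hπpos n).le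
  refine ⟨hP.tsum_mul_apply hπsum, fun ρ hρ _ => ?_⟩
  have hπ0 : 0 ≤ 1 - π 0 := sub_nonneg.2 (le_hasSum hπsum 0 fun j _ => hπ_nonneg j)
  have hρ0 : 0 < ρ := hπ0.trans_lt hρ
  obtain ⟨s, hV⟩ := hπV
  have hs : 0 ≤ s := hV.nonneg fun n => mul_nonneg (hπ_nonneg n) (zero_le_one.trans (hV1 n))
  refine ⟨(1 + 2 * s) / ρ, by positivity, fun n f hfV m => ?_⟩
  have hf : HasSum (fun i => (π i : ℂ) * f i) (∑' i, (π i : ℂ) * f i) :=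
    (hV.summable.of_norm_bounded fun i => norm_ofReal_mul_le_mul (hπ_nonneg i) (hfV i)).hasSum
  have hVm := hV1 m
  rcases n with _ | n
  · calc ‖f m - ∑' i, (π i : ℂ) * f i‖ ≤ V m + s :=
          norm_sub_le_of_le (hfV m) (norm_le_of_hasSum_ofReal_mul hπ_nonneg hfV hV hf)
      _ ≤ (1 + 2 * s) * V m := by nlinarith
      _ ≤ (1 + 2 * s) / ρ * ρ ^ 0 * V m := by
        rw [pow_zero, mul_one]
        gcongr
        exact le_div_self (by positivity) hρ0 (by linarith)
  · calc _ ≤ (1 - π 0) ^ n * (V m + 2 * s) :=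
          hP.norm_iterate_matActC_succ_sub_le hπsum hπ_nonneg hV hfV hf n m
      _ ≤ ρ ^ n * ((1 + 2 * s) * V m) := by gcongr; nlinarith
      _ = (1 + 2 * s) / ρ * ρ ^ (n + 1) * V m := by field_simp; ring

/-- for the reversible random walk `P(0,n) = π_n`, `P(n,0) = π_0`,
`P(n,n) = 1 - π_0` (`n ≥ 1`), the distribution `π` is invariant and `P` is
`V`-geometrically ergodic with `ρ_V(P) ≤ 1 - π_0`. -/
theorem star_rw_rate
    (π : ℕ → ℝ) (hπpos : ∀ n, 0 < π n) (hπsum : HasSum π 1)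
    (P : ℕ → ℕ → ℝ)
    (hP0 : ∀ n, P 0 n = π n)
    (hPn : ∀ n : ℕ, 1 ≤ n → ∀ j, P n j = if j = 0 then π 0 else if j = n then 1 - π 0 else 0)
    (V : ℕ → ℝ) (hV1 : ∀ n, 1 ≤ V n) (hV0 : V 0 = 1)
    (hVtop : Filter.Tendsto V Filter.atTop Filter.atTop)
    (hπV : Summable (fun n => π n * V n)) :
    (∀ j, ∑' i, π i * P i j = π j)
    ∧ ∀ ρ : ℝ, 1 - π 0 < ρ → ρ < 1 →
        ∃ C : ℝ, 0 < C ∧ ∀ n : ℕ, ∀ f : ℕ → ℂ, (∀ m, ‖f m‖ ≤ V m) →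
          ∀ m, ‖(matActC P)^[n] f m - ∑' i, (π i : ℂ) * f i‖ ≤ C * ρ ^ n * V m :=
  star_rw_rate_general π hπpos hπsum P hP0 hPn V hV1 hπV
end
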